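/- The optimal one-to-one code length satisfies Λ(X) − 2 < L(X): for every discrete random variable X, Σ_{i≥1} p_X↓(i)⌊log₂ i⌋ > Σ_{i≥1} p_X↓(i)(i log₂ i − (i−1) log₂(i−1)) − 2. -/

import Mathlib

noncomputable def lamt (i : ℕ) : ℝ :=
  ((i : ℝ) + 1) * Real.logb 2 ((i : ℝ) + 1) - (i : ℝ) * Real.logb 2 (i : ℝ)

def IsPMF {X : Type*} (p : X → ℝ) : Prop := (∀ x, 0 ≤ p x) ∧ HasSum p 1

def IsDescRearrange {X : Type*} (p : X → ℝ) (q : ℕ → ℝ) : Prop :=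
  Antitone q ∧ ∀ t : ℝ, 0 < t → {x | t < p x}.ncard = {i | t < q i}.ncard

open Real Finset

lemma sum_lamt (n : ℕ) : ∑ i ∈ range n, lamt i = (n : ℝ) * Real.logb 2 (n : ℝ) := by
  have h := Finset.sum_range_sub (fun j : ℕ => (j : ℝ) * Real.logb 2 (j : ℝ)) n
  simp only [Nat.cast_zero, zero_mul, sub_zero] at h
  rw [← h]
  apply Finset.sum_congr rfl
  intro i _
  simp only [lamt]
  push_cast
  ring

lemma logb_le_lamt (i : ℕ) : Real.logb 2 ((i : ℝ) + 1) ≤ lamt i := by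
  rcases Nat.eq_zero_or_pos i with h | h
  · subst h; simp [lamt]
  · have hlog : Real.logb 2 (i : ℝ) ≤ Real.logb 2 ((i : ℝ) + 1) := by
      apply Real.logb_le_logb_of_le one_lt_two (by positivity) (by linarith)
    have hi : (1:ℝ) ≤ (i:ℝ) := by exact_mod_cast h
    unfold lamt; nlinarith

lemma natlog_le_logb (i : ℕ) : (Nat.log 2 (i+1) : ℝ) ≤ Real.logb 2 ((i : ℝ) + 1) := by
  have h : (2:ℕ) ^ Nat.log 2 (i+1) ≤ i + 1 := Nat.pow_log_le_self 2 (Nat.succ_ne_zero i)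
  have h2 : ((2:ℝ)) ^ (Nat.log 2 (i+1)) ≤ (i:ℝ) + 1 := by exact_mod_cast h
  have := Real.logb_le_logb_of_le one_lt_two (by positivity) h2
  rwa [Real.logb_pow, Real.logb_self_eq_one one_lt_two, mul_one] at this

lemma natlog_le_lamt (i : ℕ) : (Nat.log 2 (i+1) : ℝ) ≤ lamt i :=
  (natlog_le_logb i).trans (logb_le_lamt i)

lemma lamt_nonneg (i : ℕ) : 0 ≤ lamt i := by
  refine le_trans ?_ (logb_le_lamt i)
  apply Real.logb_nonneg one_lt_two
  have : (0:ℝ) ≤ i := by positivity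
  linarith

lemma lamt_ge_one (i : ℕ) (h : 1 ≤ i) : 1 ≤ lamt i := by
  refine le_trans ?_ (logb_le_lamt i)
  have h2 : Real.logb 2 2 ≤ Real.logb 2 ((i:ℝ)+1) := by
    apply Real.logb_le_logb_of_le one_lt_two (by norm_num)
    have : (1:ℝ) ≤ i := by exact_mod_cast h
    linarith
  rwa [Real.logb_self_eq_one one_lt_two] at h2

lemma L0 {r : ℝ} (h1 : 1 ≤ r) (h2 : r ≤ 2) : Real.logb 2 r ≤ 2 - 2/r := by
  have hr0 : 0 < r := by linarith
  set s : ℝ := 2 / r with hs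
  have hs1 : 1 ≤ s := by rw [hs, le_div_iff₀ hr0]; linarith
  have hs2 : s ≤ 2 := by rw [hs, div_le_iff₀ hr0]; linarith
  -- concavity: (s-1) * log 2 ≤ log s
  have key : (s - 1) * Real.log 2 ≤ Real.log s := by
    have hcc := strictConcaveOn_log_Ioi.concaveOn.2 (Set.mem_Ioi.2 one_pos)
      (Set.mem_Ioi.2 two_pos) (show (0:ℝ) ≤ 2 - s by linarith) (show (0:ℝ) ≤ s - 1 by linarith)
      (show (2 - s) + (s - 1) = 1 by ring)
    simp only [smul_eq_mul, Real.log_one, mul_zero, zero_add] at hcc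
    have : (2 - s) * 1 + (s - 1) * 2 = s := by ring
    rw [this] at hcc
    linarith
  have hlog2 : 0 < Real.log 2 := Real.log_pos one_lt_two
  have hrs : Real.log r = Real.log 2 - Real.log s := by
    rw [hs, Real.log_div (by norm_num) (ne_of_gt hr0)]
    ring
  rw [Real.logb, hrs]
  rw [div_le_iff₀ hlog2]
  have : 2 - 2/r = 2 - s := by rw [hs]
  rw [this]
  nlinarith

lemma NL : ∀ n : ℕ, 1 ≤ n →
    ∑ i ∈ range n, (Nat.log 2 (i+1) : ℝ)
      = ((n:ℝ)+1) * (Nat.log 2 n : ℝ) - 2^(Nat.log 2 n + 1) + 2 := by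
  intro n hn
  induction n with
  | zero => omega
  | succ m ih =>
    rcases Nat.eq_zero_or_pos m with hm | hm
    · subst hm; norm_num
    · have ihm := ih hm
      set K := Nat.log 2 m with hK
      have hple : 2^K ≤ m := Nat.pow_log_le_self 2 (by omega)
      have hplt : m < 2^(K+1) := Nat.lt_pow_succ_log_self (by norm_num) m
      rw [Finset.sum_range_succ, ihm]
      rcases lt_or_eq_of_le (Nat.succ_le_of_lt hplt) with hcase | hcase
      · -- m+1 < 2^(K+1), log stays K
        have hlog : Nat.log 2 (m+1) = K :=
          Nat.log_eq_of_pow_le_of_lt_pow (by omega) hcase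
        rw [hlog]
        push_cast
        ring
      · -- m+1 = 2^(K+1)
        have hlog : Nat.log 2 (m+1) = K + 1 := by
          have h' : m + 1 = 2^(K+1) := hcase
          rw [h']; exact Nat.log_pow (by norm_num) (K+1)
        have hcast : ((m:ℝ)+1) = 2^(K+1) := by exact_mod_cast congrArg (Nat.cast (R := ℝ)) hcase
        rw [hlog]
        push_cast
        push_cast at hcast
        have hpow : (2:ℝ)^(K+1+1) = 2 * 2^(K+1) := by ring
        nlinarith [hcast, hpow]

noncomputable def Cfun (n : ℕ) : ℝ := ∑ i ∈ range n, (lamt i - (Nat.log 2 (i+1) : ℝ))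

lemma KL (n : ℕ) (hn : 1 ≤ n) : Cfun n ≤ 2*(n:ℝ) - 2 := by
  have hsum : Cfun n = (n:ℝ) * Real.logb 2 (n:ℝ) - (((n:ℝ)+1) * (Nat.log 2 n : ℝ)
      - 2^(Nat.log 2 n + 1) + 2) := by
    rw [Cfun, Finset.sum_sub_distrib, sum_lamt, NL n hn]
  set K := Nat.log 2 n with hK
  have hple : (2:ℕ)^K ≤ n := Nat.pow_log_le_self 2 (by omega)
  have hplt : n < 2^(K+1) := Nat.lt_pow_succ_log_self (by norm_num) n
  have hpleR : (2:ℝ)^K ≤ (n:ℝ) := by exact_mod_cast hple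
  have hpltR : (n:ℝ) < 2^(K+1) := by exact_mod_cast hplt
  have hpK : (0:ℝ) < 2^K := by positivity
  have hn0 : (0:ℝ) < n := by exact_mod_cast hn
  set r : ℝ := (n:ℝ) / 2^K with hr
  have hr1 : 1 ≤ r := by rw [hr, le_div_iff₀ hpK]; linarith
  have hr2 : r ≤ 2 := by
    rw [hr, div_le_iff₀ hpK]
    have : (2:ℝ)^(K+1) = 2 * 2^K := by ring
    linarith [hpltR, this.symm ▸ hpltR]
  have hr0 : 0 < r := by linarith
  have hlogr : Real.logb 2 r = Real.logb 2 (n:ℝ) - K := by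
    rw [hr, Real.logb_div (ne_of_gt hn0) (ne_of_gt hpK), Real.logb_pow,
      Real.logb_self_eq_one one_lt_two, mul_one]
  have hL0 := L0 hr1 hr2
  have hdiv : 2 * (n:ℝ) / r = 2^(K+1) := by
    rw [hr]
    field_simp
    ring
  -- n * logb 2 n ≤ n*K + 2n - 2^(K+1)
  have key : (n:ℝ) * Real.logb 2 (n:ℝ) ≤ (n:ℝ)*K + 2*(n:ℝ) - 2^(K+1) := by
    have h1 : (n:ℝ) * Real.logb 2 r ≤ (n:ℝ) * (2 - 2/r) :=
      mul_le_mul_of_nonneg_left hL0 (le_of_lt hn0)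
    have h2 : (n:ℝ) * (2/r) = 2^(K+1) := by
      rw [mul_div_assoc'] at *
      rw [mul_comm (n:ℝ) 2]
      exact hdiv
    rw [hlogr] at h1
    nlinarith [h1, h2]
  have hKnn : (0:ℝ) ≤ (K:ℝ) := by positivity
  rw [hsum]
  nlinarith [key, hKnn]

lemma Cfun_succ_sub (i : ℕ) : Cfun (i+1) - Cfun i = lamt i - (Nat.log 2 (i+1) : ℝ) := by
  simp only [Cfun, Finset.sum_range_succ, Finset.sum_sub_distrib]
  ring

lemma abel (q : ℕ → ℝ) (hA : Antitone q) : ∀ N : ℕ,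
    ∑ i ∈ range (N+1), q i * (Cfun (i+1) - Cfun i)
      ≤ 2 * (∑ i ∈ range (N+1), q i) - 2 * q 0
        + q N * (Cfun (N+1) - (2*((N:ℝ)+1) - 2)) := by
  intro N
  induction N with
  | zero => simp [Cfun]
  | succ M ih =>
    have hC : Cfun (M+1) ≤ 2*((M:ℝ)+1) - 2 := by
      have := KL (M+1) (by omega)
      push_cast at this ⊢
      linarith
    have hq : q (M+1) ≤ q M := hA (by omega)
    rw [Finset.sum_range_succ, Finset.sum_range_succ (f := q)]
    push_cast
    nlinarith [ih, hC, hq]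

lemma FB (q : ℕ → ℝ) (hA : Antitone q) (hnn : ∀ i, 0 ≤ q i)
    (hps : ∀ N, ∑ i ∈ range N, q i ≤ 1) :
    ∀ N, ∑ i ∈ range N, q i * (lamt i - (Nat.log 2 (i+1):ℝ)) ≤ 2 - 2 * q 0 := by
  intro N
  have hq01 : q 0 ≤ 1 := by have := hps 1; simpa using this
  cases N with
  | zero => simp; linarith
  | succ M =>
    have h := abel q hA M
    have he : ∑ i ∈ range (M+1), q i * (Cfun (i+1) - Cfun i)
        = ∑ i ∈ range (M+1), q i * (lamt i - (Nat.log 2 (i+1):ℝ)) :=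
      Finset.sum_congr rfl (fun i _ => by rw [Cfun_succ_sub])
    have hC : Cfun (M+1) ≤ 2*((M:ℝ)+1) - 2 := by
      have := KL (M+1) (by omega); push_cast at this ⊢; linarith
    have htail : q M * (Cfun (M+1) - (2*((M:ℝ)+1) - 2)) ≤ 0 :=
      mul_nonpos_of_nonneg_of_nonpos (hnn M) (by linarith)
    have hs := hps (M+1)
    rw [he] at h
    linarith

section rearrange
variable {X : Type*} {p : X → ℝ} {q : ℕ → ℝ}

lemma finite_gt (hs : Summable p) {t : ℝ} (ht : 0 < t) : {x | t < p x}.Finite := by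
  have h := hs.tendsto_cofinite_zero
  have h2 : ∀ᶠ x in Filter.cofinite, p x < t := h.eventually (eventually_lt_nhds ht)
  rw [Filter.eventually_cofinite] at h2
  exact h2.subset (fun x hx => by simp at hx ⊢; linarith [hx])

lemma qfin (hp : IsPMF p) (hq : IsDescRearrange p q) {t : ℝ} (ht : 0 < t) :
    {i | t < q i}.Finite := by
  by_contra hinf
  -- then q i > t for all i (by antitone), so for each 0 < s the p-level set is empty
  have hall : ∀ i, t < q i := by
    intro i
    obtain ⟨j, hj, hij⟩ : ∃ j ∈ {i | t < q i}, i ≤ j := by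
      rcases Set.Infinite.exists_gt hinf i with ⟨j, hj, hij⟩
      exact ⟨j, hj, le_of_lt hij⟩
    exact lt_of_lt_of_le hj (hq.1 hij)
  have hple : ∀ x, p x ≤ 0 := by
    intro x
    by_contra hx
    push_neg at hx
    set s := min t (p x) with hs
    have hs0 : 0 < s := lt_min ht hx
    have hsfin : {y | s/2 < p y}.Finite := finite_gt hp.2.summable (by linarith)
    have hcount := hq.2 (s/2) (by linarith)
    have : {i | s/2 < q i} = Set.univ := by
      ext i; simp only [Set.mem_setOf_eq, Set.mem_univ, iff_true]
      have := hall i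
      have : t < q i := this
      have hst : s ≤ t := min_le_left _ _
      linarith
    rw [this] at hcount
    rw [Set.ncard_univ] at hcount
    have : Nat.card ℕ = 0 := Nat.card_eq_zero_of_infinite
    rw [this] at hcount
    have hempty : {y | s/2 < p y} = ∅ := by
      have := Set.ncard_eq_zero hsfin |>.mp hcount
      exact this
    have hxin : x ∈ {y | s/2 < p y} := by
      simp only [Set.mem_setOf_eq]
      have : s ≤ p x := min_le_right _ _
      linarith
    rw [hempty] at hxin
    exact hxin
  have : (1:ℝ) ≤ 0 := hasSum_le hple hp.2 hasSum_zero
  linarith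

end rearrange

section rearrange2
variable {X : Type*} {p : X → ℝ} {q : ℕ → ℝ}

lemma exists_pos (hp : IsPMF p) : ∃ x, 0 < p x := by
  by_contra h
  push_neg at h
  have : (1:ℝ) ≤ 0 := hasSum_le h hp.2 hasSum_zero
  linarith

lemma q0_pos (hp : IsPMF p) (hq : IsDescRearrange p q) : 0 < q 0 := by
  obtain ⟨x, hx⟩ := exists_pos hp
  have ht : (0:ℝ) < p x / 2 := by linarith
  have hfin : {y | p x / 2 < p y}.Finite := finite_gt hp.2.summable ht
  have hcount := hq.2 (p x / 2) ht
  have hmem : x ∈ {y | p x / 2 < p y} := by simp; linarith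
  have hpos : 0 < {y | p x / 2 < p y}.ncard :=
    Set.ncard_pos hfin |>.mpr ⟨x, hmem⟩
  rw [hcount] at hpos
  obtain ⟨i, hi⟩ := Set.nonempty_of_ncard_ne_zero (Nat.pos_iff_ne_zero.mp hpos)
  have : p x / 2 < q i := hi
  have := hq.1 (Nat.zero_le i)
  linarith

lemma ncard_p_ge (hp : IsPMF p) (hq : IsDescRearrange p q) (i : ℕ) {t : ℝ}
    (ht : 0 < t) (h : t < q i) : i + 1 ≤ {x | t < p x}.ncard := by
  have hqf : {j | t < q j}.Finite := qfin hp hq ht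
  have hsub : (↑(Finset.Iic i) : Set ℕ) ⊆ {j | t < q j} := by
    intro j hj
    simp only [Finset.coe_Iic, Set.mem_Iic] at hj
    exact lt_of_lt_of_le h (hq.1 hj)
  have := Set.ncard_le_ncard hsub hqf
  rw [Set.ncard_coe_finset, Nat.card_Iic] at this
  rw [hq.2 t ht]
  exact this

lemma exists_inj (hp : IsPMF p) (hq : IsDescRearrange p q) (x₀ : X) {ε : ℝ} (hε : 0 < ε) :
    ∀ N : ℕ, ∃ f : ℕ → X, Set.InjOn f {i | i < N ∧ ε < q i} ∧
      ∀ i < N, ε < q i → q i - ε < p (f i) := by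
  intro N
  induction N with
  | zero => exact ⟨fun _ => x₀, by simp [Set.InjOn], by simp⟩
  | succ M ih =>
    obtain ⟨f, hinj, hf⟩ := ih
    by_cases hqM : ε < q M
    · -- pick a new element
      have ht : 0 < q M - ε := by linarith
      have hfin : {x | q M - ε < p x}.Finite := finite_gt hp.2.summable ht
      have hcard : M + 1 ≤ {x | q M - ε < p x}.ncard := ncard_p_ge hp hq M ht (by linarith)
      have himfin : (f '' {i | i < M ∧ ε < q i}).Finite :=
        ((Set.finite_Iio M).subset (fun i hi => hi.1)).image f
      have himcard : (f '' {i | i < M ∧ ε < q i}).ncard ≤ M := by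
        calc (f '' {i | i < M ∧ ε < q i}).ncard
            ≤ {i | i < M ∧ ε < q i}.ncard :=
              Set.ncard_image_le ((Set.finite_Iio M).subset (fun i hi => hi.1))
          _ ≤ (Set.Iio M).ncard := Set.ncard_le_ncard (fun i hi => hi.1) (Set.finite_Iio M)
          _ = M := by rw [← Finset.coe_Iio, Set.ncard_coe_finset, Nat.card_Iio]
      have hex : ∃ x ∈ {x | q M - ε < p x}, x ∉ f '' {i | i < M ∧ ε < q i} := by
        by_contra hcon
        push_neg at hcon
        have hsub : {x | q M - ε < p x} ⊆ f '' {i | i < M ∧ ε < q i} := hcon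
        have := Set.ncard_le_ncard hsub himfin
        omega
      obtain ⟨x, hx, hxn⟩ := hex
      refine ⟨Function.update f M x, ?_, ?_⟩
      · intro i hi j hj hij
        simp only [Set.mem_setOf_eq] at hi hj
        rcases Nat.lt_succ_iff_lt_or_eq.mp hi.1 with hiM | hiM
        · rcases Nat.lt_succ_iff_lt_or_eq.mp hj.1 with hjM | hjM
          · rw [Function.update_of_ne (by omega), Function.update_of_ne (by omega)] at hij
            exact hinj ⟨hiM, hi.2⟩ ⟨hjM, hj.2⟩ hij
          · rw [Function.update_of_ne (show i ≠ M by omega), hjM, Function.update_self] at hij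
            exact absurd (⟨i, ⟨hiM, hi.2⟩, hij⟩ : x ∈ f '' {k | k < M ∧ ε < q k}) hxn
        · rcases Nat.lt_succ_iff_lt_or_eq.mp hj.1 with hjM | hjM
          · rw [hiM, Function.update_self, Function.update_of_ne (show j ≠ M by omega)] at hij
            exact absurd (⟨j, ⟨hjM, hj.2⟩, hij.symm⟩ : x ∈ f '' {k | k < M ∧ ε < q k}) hxn
          · omega
      · intro i hi hqi
        rcases Nat.lt_succ_iff_lt_or_eq.mp hi with hiM | hiM
        · rw [Function.update_of_ne (by omega)]
          exact hf i hiM hqi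
        · subst hiM
          rw [Function.update_self]
          exact hx
    · -- no new index needed
      refine ⟨f, ?_, ?_⟩
      · intro i hi j hj hij
        simp only [Set.mem_setOf_eq] at hi hj
        have hiM : i < M := by
          rcases Nat.lt_succ_iff_lt_or_eq.mp hi.1 with h | h
          · exact h
          · exact absurd (h ▸ hi.2) hqM
        have hjM : j < M := by
          rcases Nat.lt_succ_iff_lt_or_eq.mp hj.1 with h | h
          · exact h
          · exact absurd (h ▸ hj.2) hqM
        exact hinj ⟨hiM, hi.2⟩ ⟨hjM, hj.2⟩ hij
      · intro i hi hqi
        have hiM : i < M := by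
          rcases Nat.lt_succ_iff_lt_or_eq.mp hi with h | h
          · exact h
          · exact absurd (h ▸ hqi) hqM
        exact hf i hiM hqi

end rearrange2

section rearrange3
variable {X : Type*} {p : X → ℝ} {q : ℕ → ℝ}

lemma partial_sum_le_one (hp : IsPMF p) (hq : IsDescRearrange p q) :
    ∀ N, ∑ i ∈ range N, q i ≤ 1 := by
  classical
  intro N
  rcases Nat.eq_zero_or_pos N with h | hN
  · subst h; simp
  obtain ⟨x₀, _⟩ := exists_pos hp
  apply le_of_forall_pos_le_add
  intro ε' hε'
  have hN0 : (0:ℝ) < N := by exact_mod_cast hN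
  set ε := ε' / N with hε
  have hε0 : 0 < ε := by positivity
  obtain ⟨f, hinj, hf⟩ := exists_inj hp hq x₀ hε0 N
  have step : ∀ i ∈ range N, q i ≤ ε + (if ε < q i then p (f i) else 0) := by
    intro i hi
    simp only [Finset.mem_range] at hi
    by_cases h : ε < q i
    · simp only [h, if_true]
      have := hf i hi h
      linarith
    · simp only [h, if_false]
      push_neg at h
      linarith
  have hfilter : ∑ i ∈ range N, (if ε < q i then p (f i) else 0)
      = ∑ i ∈ (range N).filter (fun i => ε < q i), p (f i) := by
    rw [Finset.sum_filter]
  have himg : ∑ i ∈ (range N).filter (fun i => ε < q i), p (f i)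
      = ∑ x ∈ ((range N).filter (fun i => ε < q i)).image f, p x := by
    rw [Finset.sum_image]
    intro a ha b hb hab
    simp only [Finset.mem_coe, Finset.mem_filter, Finset.mem_range] at ha hb
    exact hinj ⟨ha.1, ha.2⟩ ⟨hb.1, hb.2⟩ hab
  have hle1 : ∑ x ∈ ((range N).filter (fun i => ε < q i)).image f, p x ≤ 1 :=
    sum_le_hasSum _ (fun x _ => hp.1 x) hp.2
  calc ∑ i ∈ range N, q i ≤ ∑ i ∈ range N, (ε + if ε < q i then p (f i) else 0) :=
        Finset.sum_le_sum step
    _ = (N:ℝ) * ε + ∑ i ∈ range N, (if ε < q i then p (f i) else 0) := by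
        rw [Finset.sum_add_distrib]
        simp [mul_comm]
    _ ≤ (N:ℝ) * ε + 1 := by
        rw [hfilter, himg]; linarith
    _ = 1 + ε' := by
        rw [hε]
        field_simp
        ring

end rearrange3

lemma not_summable_tail (f : ℕ → ℝ) (c : ℝ) (hc : c < 0) (j : ℕ)
    (h : ∀ i, j ≤ i → f i ≤ c) : ¬ Summable f := by
  intro hs
  have h0 := hs.tendsto_atTop_zero
  have h2 : ∀ᶠ i in Filter.atTop, c < f i := h0.eventually (eventually_gt_nhds hc)
  obtain ⟨i, hi1, hi2⟩ := (h2.and (Filter.eventually_ge_atTop j)).exists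
  exact absurd (h i hi2) (not_le.mpr hi1)

/-- `Λ(X) − 2 < L(X)` for every discrete random variable `X`:
`∑_i p↓(i)(i log₂ i − (i−1) log₂ (i−1)) − 2 < ∑_i p↓(i) ⌊log₂ i⌋`.
Here `q i = p↓(i+1)`. -/
theorem stmt14 {X : Type*} (p : X → ℝ) (q : ℕ → ℝ)
    (hpmf : IsPMF p) (hq : IsDescRearrange p q) :
    (∑' i : ℕ, q i * lamt i) - 2 < ∑' i : ℕ, q i * (Nat.log 2 (i + 1) : ℝ) := by
  by_cases hneg : ∃ j, q j < 0
  · obtain ⟨j, hj⟩ := hneg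
    have hqtail : ∀ i, j + 1 ≤ i → q i ≤ q j ∧ q i < 0 := by
      intro i hi
      have := hq.1 (show j ≤ i by omega)
      exact ⟨this, lt_of_le_of_lt this hj⟩
    have h1 : ¬ Summable (fun i => q i * lamt i) := by
      apply not_summable_tail _ (q j) hj (j+1)
      intro i hi
      obtain ⟨hqi, hqi0⟩ := hqtail i hi
      have hl : 1 ≤ lamt i := lamt_ge_one i (by omega)
      nlinarith
    have h2 : ¬ Summable (fun i => q i * (Nat.log 2 (i + 1) : ℝ)) := by
      apply not_summable_tail _ (q j) hj (j+1)
      intro i hi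
      obtain ⟨hqi, hqi0⟩ := hqtail i hi
      have hl : 1 ≤ (Nat.log 2 (i+1) : ℝ) := by
        have : 1 ≤ Nat.log 2 (i+1) := Nat.log_pos (by norm_num) (by omega)
        exact_mod_cast this
      nlinarith
    rw [tsum_eq_zero_of_not_summable h1, tsum_eq_zero_of_not_summable h2]
    norm_num
  · push_neg at hneg
    by_cases hsumm : Summable (fun i => q i * lamt i)
    · have hg : Summable (fun i => q i * (Nat.log 2 (i + 1) : ℝ)) :=
        Summable.of_nonneg_of_le
          (fun i => mul_nonneg (hneg i) (Nat.cast_nonneg _))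
          (fun i => mul_le_mul_of_nonneg_left (natlog_le_lamt i) (hneg i)) hsumm
      have hsub : Summable (fun i => q i * (lamt i - (Nat.log 2 (i + 1) : ℝ))) := by
        have := hsumm.sub hg
        simpa only [mul_sub] using this
      have htsub : (∑' i : ℕ, q i * lamt i) - (∑' i : ℕ, q i * (Nat.log 2 (i + 1) : ℝ))
          = ∑' i : ℕ, q i * (lamt i - (Nat.log 2 (i + 1) : ℝ)) := by
        rw [← Summable.tsum_sub hsumm hg]
        congr 1
        ext i
        ring
      have hbound : (∑' i : ℕ, q i * (lamt i - (Nat.log 2 (i + 1) : ℝ))) ≤ 2 - 2 * q 0 :=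
        le_of_tendsto' hsub.hasSum.tendsto_sum_nat
          (FB q hq.1 hneg (partial_sum_le_one hpmf hq))
      have hq0 := q0_pos hpmf hq
      linarith
    · rw [tsum_eq_zero_of_not_summable hsumm]
      have : 0 ≤ ∑' i : ℕ, q i * (Nat.log 2 (i + 1) : ℝ) :=
        tsum_nonneg (fun i => mul_nonneg (hneg i) (Nat.cast_nonneg _))
      linarith
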